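/- Let X be a rugged real Banach space, A : X → X* bounded linear monotone with ‖A‖ = 1, and f* ∈ X* with ‖f*‖ = 1, satisfying the whs condition (for all λ > 0, ε > 0: if (Ax + λJx) ∩ B̄(f*, ε) ≠ ∅ then ⟨x, f*⟩ ≤ 3ε). Then for every λ > 0 and every α ∈ ℝ \ {0}, setting R = closure of ran(A + λJ): R is not convex, the closed convex hull of R equals X*, and d(αf*, R) ≥ |α|·m(λ) > 0, where m(λ) = (3λ² + 9λ + 4 − (λ+1)√(9λ² + 36λ + 16))/(4λ + 2). -/

import Mathlib

/-!
Write `m = m(λ)` and let `‖A x + λ x* - f*‖ ≤ ε < 1` with `x* ∈ J x` and `t = ‖x‖`. Pairing with `x`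
and using `⟨A x, x⟩ ≥ 0` together with the whs condition `⟨x, f*⟩ ≤ 3ε` gives `λ t² ≤ ε t + 3ε`,
while the triangle inequality gives `1 - ε ≤ (1 + λ) t`. Eliminating `t` leaves
`(2λ + 1) ε² - (3λ² + 9λ + 4) ε + λ ≤ 0`, whose smaller root is `m`; hence `ε ≥ m`. Since
`ran(A + λJ)` is invariant under scaling, this gives `d(α f*, R) ≥ |α| m`.

The range is a symmetric cone, so its convex hull is its linear span, which contains every
`u - v` with `u, v ∈ J x`; ruggedness makes that span dense. A closed convex `R` would therefore be
all of `X*`, contradicting `d(α f*, R) > 0`.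
-/

open NormedSpace

open scoped Pointwise

/-- The duality mapping of a real normed space: `x* ∈ J x` iff `⟨x, x*⟩ = ‖x‖² = ‖x*‖²`. -/
def dualityMap {X : Type*} [NormedAddCommGroup X] [NormedSpace ℝ X] (x : X) :
    Set (StrongDual ℝ X) :=
  {f | f x = ‖x‖ ^ 2 ∧ ‖x‖ ^ 2 = ‖f‖ ^ 2}

/-- The constant `m(λ)`: the smaller root of `(2λ + 1) e² - (3λ² + 9λ + 4) e + λ`. -/
noncomputable def whsDistBound (lam : ℝ) : ℝ :=
  (3 * lam ^ 2 + 9 * lam + 4 - (lam + 1) * Real.sqrt (9 * lam ^ 2 + 36 * lam + 16)) /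
    (4 * lam + 2)

section WhsDistBound

variable {lam : ℝ}

lemma sq_sqrt_whsDistBound_radicand (hlam : 0 < lam) :
    Real.sqrt (9 * lam ^ 2 + 36 * lam + 16) ^ 2 = 9 * lam ^ 2 + 36 * lam + 16 :=
  Real.sq_sqrt (by positivity)

lemma whsDistBound_pos (hlam : 0 < lam) : 0 < whsDistBound lam := by
  have hs := sq_sqrt_whsDistBound_radicand hlam
  have hs0 := Real.sqrt_nonneg (9 * lam ^ 2 + 36 * lam + 16)
  apply div_pos _ (by linarith)
  nlinarith [sq_nonneg ((lam + 1) * Real.sqrt (9 * lam ^ 2 + 36 * lam + 16) -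
    (3 * lam ^ 2 + 9 * lam + 4))]

lemma whsDistBound_lt_one (hlam : 0 < lam) : whsDistBound lam < 1 := by
  have hs := sq_sqrt_whsDistBound_radicand hlam
  have hs0 := Real.sqrt_nonneg (9 * lam ^ 2 + 36 * lam + 16)
  have hgt : 3 * lam + 2 < Real.sqrt (9 * lam ^ 2 + 36 * lam + 16) := by nlinarith
  rw [whsDistBound, div_lt_one (by linarith)]
  nlinarith

lemma whsDistBound_le_of_quadratic_nonpos {e : ℝ} (hlam : 0 < lam)
    (hq : (2 * lam + 1) * e ^ 2 - (3 * lam ^ 2 + 9 * lam + 4) * e + lam ≤ 0) :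
    whsDistBound lam ≤ e := by
  set s := Real.sqrt (9 * lam ^ 2 + 36 * lam + 16)
  have hs : s ^ 2 = 9 * lam ^ 2 + 36 * lam + 16 := sq_sqrt_whsDistBound_radicand hlam
  have hs0 : 0 ≤ s := Real.sqrt_nonneg _
  rw [whsDistBound, div_le_iff₀ (by linarith)]
  by_contra! hlt
  -- With `a = 3λ² + 9λ + 4 - (4λ + 2) e`, `(a - (λ + 1) s) (a + (λ + 1) s)` is `4 (2λ + 1)` times
  -- the quadratic in `hq`.
  have hminus : 0 < 3 * lam ^ 2 + 9 * lam + 4 - e * (4 * lam + 2) - (lam + 1) * s := by linarith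
  have hplus : 0 < 3 * lam ^ 2 + 9 * lam + 4 - e * (4 * lam + 2) + (lam + 1) * s := by
    nlinarith [mul_nonneg (by linarith : (0:ℝ) ≤ lam + 1) hs0]
  nlinarith [mul_pos hminus hplus]

lemma quadratic_nonpos_of_bounds {e t : ℝ} (hlam : 0 < lam) (he : 0 ≤ e) (he1 : e < 1)
    (hquad : lam * t ^ 2 ≤ e * t + 3 * e) (hlow : 1 - e ≤ (1 + lam) * t) :
    (2 * lam + 1) * e ^ 2 - (3 * lam ^ 2 + 9 * lam + 4) * e + lam ≤ 0 := by
  have hT : 0 < (1 + lam) * t := by linarith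
  -- `λ T² - e (1 + λ) T - 3e (1 + λ)²` is convex and `≤ 0` at `0` and at `T = (1 + λ) t`,
  -- hence also at `1 - e`, where it equals the quadratic of the conclusion.
  have hTq : lam * ((1 + lam) * t) ^ 2 ≤
      e * (1 + lam) * ((1 + lam) * t) + 3 * e * (1 + lam) ^ 2 := by
    nlinarith [mul_le_mul_of_nonneg_right hquad (sq_nonneg (1 + lam))]
  have hfactor : 0 ≤ ((1 + lam) * t - (1 - e)) *
      (lam * (1 - e) * ((1 + lam) * t) + 3 * e * (1 + lam) ^ 2) := by
    apply mul_nonneg (by linarith)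
    have := mul_nonneg (mul_nonneg hlam.le (by linarith : (0:ℝ) ≤ 1 - e)) hT.le
    nlinarith [sq_nonneg (1 + lam)]
  nlinarith [mul_pos hT (by linarith : (0:ℝ) < 1 - e)]

lemma whsDistBound_le {e t : ℝ} (hlam : 0 < lam) (he : 0 ≤ e)
    (hquad : lam * t ^ 2 ≤ e * t + 3 * e) (hlow : 1 - e ≤ (1 + lam) * t) :
    whsDistBound lam ≤ e := by
  rcases lt_or_ge e 1 with he1 | he1
  · exact whsDistBound_le_of_quadratic_nonpos hlam
      (quadratic_nonpos_of_bounds hlam he he1 hquad hlow)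
  · exact (whsDistBound_lt_one hlam).le.trans he1

end WhsDistBound

section DualityMap

variable {X : Type*} [NormedAddCommGroup X] [NormedSpace ℝ X]

lemma zero_mem_dualityMap_zero : (0 : StrongDual ℝ X) ∈ dualityMap (0 : X) := by
  simp [dualityMap]

lemma smul_mem_dualityMap (c : ℝ) {x : X} {u : StrongDual ℝ X} (hu : u ∈ dualityMap x) :
    c • u ∈ dualityMap (c • x) := by
  obtain ⟨hux, hnorm⟩ := hu
  refine ⟨?_, ?_⟩
  · simp only [smul_apply, map_smul, smul_eq_mul, norm_smul, mul_pow,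
      Real.norm_eq_abs, sq_abs, hux]
    ring
  · simp only [norm_smul, mul_pow, hnorm]

lemma norm_eq_of_mem_dualityMap {x : X} {u : StrongDual ℝ X} (hu : u ∈ dualityMap x) :
    ‖u‖ = ‖x‖ :=
  (pow_left_inj₀ (norm_nonneg u) (norm_nonneg x) two_ne_zero).mp hu.2.symm

end DualityMap

section RangeAddDualityMap

variable {X : Type*} [NormedAddCommGroup X] [NormedSpace ℝ X]

/-- `ran(A + λJ)`. -/
def rangeAddDualityMap (A : X →L[ℝ] StrongDual ℝ X) (lam : ℝ) : Set (StrongDual ℝ X) :=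
  {g | ∃ x xs, xs ∈ dualityMap x ∧ g = A x + lam • xs}

variable {A : X →L[ℝ] StrongDual ℝ X} {lam : ℝ}

lemma zero_mem_rangeAddDualityMap : (0 : StrongDual ℝ X) ∈ rangeAddDualityMap A lam :=
  ⟨0, 0, zero_mem_dualityMap_zero, by simp⟩

lemma smul_mem_rangeAddDualityMap (c : ℝ) {g : StrongDual ℝ X}
    (hg : g ∈ rangeAddDualityMap A lam) : c • g ∈ rangeAddDualityMap A lam := by
  obtain ⟨x, xs, hxs, rfl⟩ := hg
  exact ⟨c • x, c • xs, smul_mem_dualityMap c hxs, by rw [map_smul, smul_add, smul_comm]⟩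

lemma smul_rangeAddDualityMap {c : ℝ} (hc : c ≠ 0) :
    c • rangeAddDualityMap A lam = rangeAddDualityMap A lam := by
  refine subset_antisymm (Set.smul_set_subset_iff.mpr fun g hg ↦
    smul_mem_rangeAddDualityMap c hg) fun g hg ↦ ?_
  exact ⟨c⁻¹ • g, smul_mem_rangeAddDualityMap _ hg, smul_inv_smul₀ hc g⟩

end RangeAddDualityMap

section DistanceEstimate

variable {X : Type*} [NormedAddCommGroup X] [NormedSpace ℝ X]
  {A : X →L[ℝ] StrongDual ℝ X} {f : StrongDual ℝ X} {lam : ℝ}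

lemma whsDistBound_le_norm_sub (hlam : 0 < lam) (hpos : ∀ x, 0 ≤ A x x) (hA : ‖A‖ ≤ 1)
    (hf : ‖f‖ = 1)
    (hwhs : ∀ ε > (0:ℝ), ∀ x : X,
      (∃ xs ∈ dualityMap x, ‖A x + lam • xs - f‖ ≤ ε) → f x ≤ 3 * ε)
    {g : StrongDual ℝ X} (hg : g ∈ rangeAddDualityMap A lam) :
    whsDistBound lam ≤ ‖g - f‖ := by
  obtain ⟨x, xs, hxs, rfl⟩ := hg
  refine le_of_forall_gt_imp_ge_of_dense fun e he ↦ ?_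
  have he0 : 0 < e := (norm_nonneg _).trans_lt he
  have hfx : f x ≤ 3 * e := hwhs e he0 x ⟨xs, hxs, he.le⟩
  have hquad : lam * ‖x‖ ^ 2 ≤ e * ‖x‖ + 3 * e := by
    have hpair : (A x + lam • xs - f) x ≤ e * ‖x‖ :=
      (Real.le_norm_self _).trans <| ((A x + lam • xs - f).le_opNorm x).trans <|
        mul_le_mul_of_nonneg_right he.le (norm_nonneg x)
    simp only [sub_apply, add_apply, smul_apply, smul_eq_mul, hxs.1] at hpair
    linarith [hpos x]
  have hlow : 1 - e ≤ (1 + lam) * ‖x‖ := by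
    have hAx : ‖A x‖ ≤ ‖x‖ := (A.le_opNorm x).trans (mul_le_of_le_one_left (norm_nonneg x) hA)
    have := calc
      ‖f‖ ≤ ‖A x + lam • xs‖ + ‖A x + lam • xs - f‖ := norm_le_norm_add_norm_sub _ _
      _ ≤ ‖A x‖ + lam * ‖xs‖ + e := by
        gcongr
        exact (norm_add_le _ _).trans_eq (by rw [norm_smul, Real.norm_of_nonneg hlam.le])
      _ ≤ (1 + lam) * ‖x‖ + e := by rw [norm_eq_of_mem_dualityMap hxs]; linarith
    linarith
  exact whsDistBound_le hlam he0.le hquad hlow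

lemma mul_whsDistBound_le_infDist (hlam : 0 < lam) (hpos : ∀ x, 0 ≤ A x x) (hA : ‖A‖ ≤ 1)
    (hf : ‖f‖ = 1)
    (hwhs : ∀ ε > (0:ℝ), ∀ x : X,
      (∃ xs ∈ dualityMap x, ‖A x + lam • xs - f‖ ≤ ε) → f x ≤ 3 * ε)
    {α : ℝ} (hα : α ≠ 0) :
    |α| * whsDistBound lam ≤ Metric.infDist (α • f) (closure (rangeAddDualityMap A lam)) := by
  rw [Metric.infDist_closure, ← smul_rangeAddDualityMap hα,
    infDist_smul₀ hα (rangeAddDualityMap A lam) f, Real.norm_eq_abs]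
  gcongr
  refine (Metric.le_infDist ⟨0, zero_mem_rangeAddDualityMap⟩).mpr fun g hg ↦ ?_
  rw [dist_comm, dist_eq_norm]
  exact whsDistBound_le_norm_sub hlam hpos hA hf hwhs hg

end DistanceEstimate

lemma span_subset_convexHull_of_smul_mem {E : Type*} [AddCommGroup E] [Module ℝ E] {s : Set E}
    (hs0 : (0 : E) ∈ s) (hs : ∀ (c : ℝ), ∀ x ∈ s, c • x ∈ s) :
    (Submodule.span ℝ s : Set E) ⊆ convexHull ℝ s := by
  have hsmul : ∀ (c : ℝ), ∀ x ∈ convexHull ℝ s, c • x ∈ convexHull ℝ s := fun c x hx ↦ by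
    have : c • x ∈ convexHull ℝ (c • s) := by
      rw [convexHull_smul]
      exact Set.smul_mem_smul_set hx
    exact convexHull_mono (Set.smul_set_subset_iff.mpr (hs c)) this
  let hull : Submodule ℝ E :=
    { carrier := convexHull ℝ s
      zero_mem' := subset_convexHull ℝ s hs0
      add_mem' := fun {x y} hx hy ↦ by
        have := convex_convexHull ℝ s (hsmul 2 x hx) (hsmul 2 y hy)
          (by norm_num : (0:ℝ) ≤ 1 / 2) (by norm_num : (0:ℝ) ≤ 1 / 2) (by norm_num)
        convert this using 1
        module
      smul_mem' := hsmul }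
  exact Submodule.span_le (p := hull) |>.mpr (subset_convexHull ℝ s)

/-- `ran(J - J)`. -/
def dualityMapDiffs (X : Type*) [NormedAddCommGroup X] [NormedSpace ℝ X] :
    Set (StrongDual ℝ X) :=
  {d | ∃ x u v, u ∈ dualityMap x ∧ v ∈ dualityMap x ∧ d = u - v}

def IsRugged (X : Type*) [NormedAddCommGroup X] [NormedSpace ℝ X] : Prop :=
  (Submodule.span ℝ (dualityMapDiffs X)).topologicalClosure = ⊤

section ConvexHull

variable {X : Type*} [NormedAddCommGroup X] [NormedSpace ℝ X]
  {A : X →L[ℝ] StrongDual ℝ X} {lam : ℝ}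

lemma sub_mem_span_rangeAddDualityMap (hlam : lam ≠ 0) {x : X} {u v : StrongDual ℝ X}
    (hu : u ∈ dualityMap x) (hv : v ∈ dualityMap x) :
    u - v ∈ Submodule.span ℝ (rangeAddDualityMap A lam) := by
  have hdiff : u - v = lam⁻¹ • ((A x + lam • u) - (A x + lam • v)) := by
    rw [add_sub_add_left_eq_sub, smul_sub, inv_smul_smul₀ hlam, inv_smul_smul₀ hlam]
  rw [hdiff]
  exact Submodule.smul_mem _ _ (Submodule.sub_mem _
    (Submodule.subset_span ⟨x, u, hu, rfl⟩) (Submodule.subset_span ⟨x, v, hv, rfl⟩))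

lemma closure_convexHull_closure_rangeAddDualityMap (hX : IsRugged X) (hlam : lam ≠ 0) :
    closure (convexHull ℝ (closure (rangeAddDualityMap A lam))) = Set.univ := by
  refine Set.eq_univ_of_univ_subset ?_
  have hspan : Submodule.span ℝ (dualityMapDiffs X) ≤
      Submodule.span ℝ (rangeAddDualityMap A lam) := by
    rw [Submodule.span_le]
    rintro _ ⟨x, u, v, hu, hv, rfl⟩
    exact sub_mem_span_rangeAddDualityMap hlam hu hv
  calc Set.univ
      = closure (Submodule.span ℝ (dualityMapDiffs X) : Set (StrongDual ℝ X)) := by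
        rw [← Submodule.topologicalClosure_coe, hX, Submodule.top_coe]
    _ ⊆ closure (Submodule.span ℝ (rangeAddDualityMap A lam)) := closure_mono hspan
    _ ⊆ closure (convexHull ℝ (rangeAddDualityMap A lam)) :=
        closure_mono (span_subset_convexHull_of_smul_mem zero_mem_rangeAddDualityMap
          fun c _ ↦ smul_mem_rangeAddDualityMap c)
    _ ⊆ closure (convexHull ℝ (closure (rangeAddDualityMap A lam))) :=
        closure_mono (convexHull_mono subset_closure)

end ConvexHull

theorem stmt15_general {X : Type*} [NormedAddCommGroup X] [NormedSpace ℝ X]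
    (hrugged : (Submodule.span ℝ {d : StrongDual ℝ X |
        ∃ x u v, u ∈ dualityMap x ∧ v ∈ dualityMap x ∧ d = u - v}).topologicalClosure = ⊤)
    (A : X →L[ℝ] StrongDual ℝ X)
    (hmono : ∀ x y : X, 0 ≤ (A x - A y) (x - y)) (hA : ‖A‖ = 1)
    (f : StrongDual ℝ X) (hf : ‖f‖ = 1)
    (hwhs : ∀ lam > (0:ℝ), ∀ ε > (0:ℝ), ∀ x : X,
      (∃ xs ∈ dualityMap x, ‖A x + lam • xs - f‖ ≤ ε) → f x ≤ 3 * ε)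
    (lam : ℝ) (hlam : 0 < lam) (α : ℝ) (hα : α ≠ 0) :
    let R := closure {g : StrongDual ℝ X | ∃ x xs, xs ∈ dualityMap x ∧ g = A x + lam • xs}
    ¬ Convex ℝ R ∧ closure (convexHull ℝ R) = Set.univ ∧
    Metric.infDist (α • f) R ≥
      |α| * ((3 * lam ^ 2 + 9 * lam + 4 -
          (lam + 1) * Real.sqrt (9 * lam ^ 2 + 36 * lam + 16)) / (4 * lam + 2)) ∧
    0 < (3 * lam ^ 2 + 9 * lam + 4 - (lam + 1) * Real.sqrt (9 * lam ^ 2 + 36 * lam + 16)) /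
        (4 * lam + 2) := by
  intro R
  have hpos : ∀ x, 0 ≤ A x x := fun x ↦ by simpa using hmono x 0
  have hdist : |α| * whsDistBound lam ≤ Metric.infDist (α • f) R :=
    mul_whsDistBound_le_infDist hlam hpos hA.le hf (hwhs lam hlam) hα
  have hm : 0 < whsDistBound lam := whsDistBound_pos hlam
  have hhull : closure (convexHull ℝ R) = Set.univ :=
    closure_convexHull_closure_rangeAddDualityMap hrugged hlam.ne'
  refine ⟨fun hconv ↦ ?_, hhull, hdist, hm⟩
  have hR : R = Set.univ := by rw [← hhull, hconv.convexHull_eq, isClosed_closure.closure_eq]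
  have hzero : Metric.infDist (α • f) R = 0 := Metric.infDist_zero_of_mem (hR ▸ Set.mem_univ _)
  linarith [mul_pos (abs_pos.mpr hα) hm]

theorem stmt15 {X : Type*} [NormedAddCommGroup X] [NormedSpace ℝ X] [CompleteSpace X]
    (hrugged : (Submodule.span ℝ {d : StrongDual ℝ X |
        ∃ x u v, u ∈ dualityMap x ∧ v ∈ dualityMap x ∧ d = u - v}).topologicalClosure = ⊤)
    (A : X →L[ℝ] StrongDual ℝ X)
    (hmono : ∀ x y : X, 0 ≤ (A x - A y) (x - y)) (hA : ‖A‖ = 1)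
    (f : StrongDual ℝ X) (hf : ‖f‖ = 1)
    (hwhs : ∀ lam > (0:ℝ), ∀ ε > (0:ℝ), ∀ x : X,
      (∃ xs ∈ dualityMap x, ‖A x + lam • xs - f‖ ≤ ε) → f x ≤ 3 * ε)
    (lam : ℝ) (hlam : 0 < lam) (α : ℝ) (hα : α ≠ 0) :
    let R := closure {g : StrongDual ℝ X | ∃ x xs, xs ∈ dualityMap x ∧ g = A x + lam • xs}
    ¬ Convex ℝ R ∧ closure (convexHull ℝ R) = Set.univ ∧
    Metric.infDist (α • f) R ≥
      |α| * ((3 * lam ^ 2 + 9 * lam + 4 -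
          (lam + 1) * Real.sqrt (9 * lam ^ 2 + 36 * lam + 16)) / (4 * lam + 2)) ∧
    0 < (3 * lam ^ 2 + 9 * lam + 4 - (lam + 1) * Real.sqrt (9 * lam ^ 2 + 36 * lam + 16)) /
        (4 * lam + 2) :=
  stmt15_general hrugged A hmono hA f hf hwhs lam hlam α hα
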